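/- arXiv:1409.3975 — 3 statements merged into one kernel-verified Lean document; each statement's English description precedes it below -/
import Mathlib

section
/- Fix a unit vector v₀ ∈ EuclideanSpace ℝ (Fin 3). For A ∈ SO(3), the fixed point set of A on the unit sphere equals exactly the two-point set {v₀, -v₀} if and only if A v₀ = v₀ and A ≠ 1. In other words, the elements of SO(3) acting on S² with fixed point set exactly {v₀, -v₀} are precisely the non-identity rotations about the axis through v₀. -/
/-!
A rotation preserves the cross product, so a rotation fixing two linearly independent vectors
`u`, `v` also fixes `u ⨯₃ v`; these three vectors form a basis, so the rotation is the identity.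
Hence a non-identity rotation about `v₀` fixes no unit vector besides `±v₀`. Conversely, the
identity fixes a unit vector orthogonal to `v₀`, which is neither `v₀` nor `-v₀`.
-/

open Matrix Module

namespace Matrix

variable {R : Type*} [CommRing R]

theorem transpose_mulVec_cross_mulVec (M : Matrix (Fin 3) (Fin 3) R) (u v : Fin 3 → R) :
    Mᵀ *ᵥ ((M *ᵥ u) ⨯₃ (M *ᵥ v)) = M.det • (u ⨯₃ v) := by
  ext i
  fin_cases i <;>
    simp [crossProduct, mulVec, dotProduct, det_fin_three, Fin.sum_univ_three] <;> ring

theorem mulVec_cross_of_mem_specialOrthogonalGroup {M : Matrix (Fin 3) (Fin 3) R}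
    (hM : M ∈ specialOrthogonalGroup (Fin 3) R) (u v : Fin 3 → R) :
    M *ᵥ (u ⨯₃ v) = (M *ᵥ u) ⨯₃ (M *ᵥ v) := by
  obtain ⟨horth, hdet⟩ := mem_specialOrthogonalGroup_iff.1 hM
  calc M *ᵥ (u ⨯₃ v) = M *ᵥ (Mᵀ *ᵥ ((M *ᵥ u) ⨯₃ (M *ᵥ v))) := by
        rw [transpose_mulVec_cross_mulVec, hdet, one_smul]
    _ = (M *ᵥ u) ⨯₃ (M *ᵥ v) := by
        rw [mulVec_mulVec, (mem_orthogonalGroup_iff _ _).1 horth, one_mulVec]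

theorem det_vecCons_cross (u v : Fin 3 → R) :
    det ![u, v, u ⨯₃ v] = (u ⨯₃ v) ⬝ᵥ (u ⨯₃ v) := by
  rw [← triple_product_eq_det, triple_product_permutation, triple_product_permutation]

theorem eq_one_of_span_eq_top_of_mulVec_eq_self {n ι : Type*} [Fintype n] [DecidableEq n]
    {M : Matrix n n R} {b : ι → n → R} (hb : Submodule.span R (Set.range b) = ⊤)
    (h : ∀ i, M *ᵥ b i = b i) : M = 1 :=
  toLin'.injective (LinearMap.ext_on_range hb (by simpa using h))

end Matrix

theorem linearIndependent_vecCons_cross {K : Type*} [Field K] [LinearOrder K]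
    [IsStrictOrderedRing K] {u v : Fin 3 → K} (h : LinearIndependent K ![u, v]) :
    LinearIndependent K ![u, v, u ⨯₃ v] := by
  refine linearIndependent_rows_of_det_ne_zero ((det_vecCons_cross u v).trans_ne ?_)
  exact dotProduct_self_eq_zero.not.2 (crossProduct_ne_zero_iff_linearIndependent.2 h)

theorem Matrix.eq_one_of_mem_specialOrthogonalGroup_of_mulVec_eq_self {K : Type*} [Field K]
    [LinearOrder K] [IsStrictOrderedRing K] {M : Matrix (Fin 3) (Fin 3) K}
    (hM : M ∈ specialOrthogonalGroup (Fin 3) K) {u v : Fin 3 → K}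
    (huv : LinearIndependent K ![u, v]) (hu : M *ᵥ u = u) (hv : M *ᵥ v = v) : M = 1 := by
  refine eq_one_of_span_eq_top_of_mulVec_eq_self
    ((linearIndependent_vecCons_cross huv).span_eq_top_of_card_eq_finrank (by simp)) ?_
  simp [Fin.forall_fin_succ, mulVec_cross_of_mem_specialOrthogonalGroup hM, hu, hv]

theorem linearIndependent_pair_of_norm_eq_one {E : Type*} [NormedAddCommGroup E]
    [NormedSpace ℝ E] {x y : E} (hx : ‖x‖ = 1) (hy : ‖y‖ = 1) (hxy : x ≠ y)
    (hxy' : x ≠ -y) :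
    LinearIndependent ℝ ![x, y] := by
  have hy0 : y ≠ 0 := ne_zero_of_norm_ne_zero (hy.trans_ne one_ne_zero)
  refine linearIndependent_fin2.2 ⟨by simpa using hy0, fun a ha => ?_⟩
  simp only [cons_val_one, cons_val_zero] at ha
  have : |a| = 1 := by simpa [← ha, norm_smul, hy] using hx
  rcases abs_eq zero_le_one |>.1 this with rfl | rfl
  · exact hxy (by simpa using ha.symm)
  · exact hxy' (by simpa using ha.symm)

theorem exists_norm_eq_one_inner_eq_zero {E : Type*} [NormedAddCommGroup E]
    [InnerProductSpace ℝ E] [FiniteDimensional ℝ E] (hE : 2 ≤ finrank ℝ E) (v : E) :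
    ∃ x : E, ‖x‖ = 1 ∧ inner ℝ x v = 0 := by
  have hrank := (ℝ ∙ v).finrank_add_finrank_orthogonal
  have hline : finrank ℝ (ℝ ∙ v) ≤ 1 := (finrank_span_le_card ({v} : Set E)).trans (by simp)
  obtain ⟨w, hw, hw0⟩ := Submodule.exists_mem_ne_zero_of_ne_bot
    (Submodule.one_le_finrank_iff.1 (by omega) : (ℝ ∙ v)ᗮ ≠ ⊥)
  refine ⟨‖w‖⁻¹ • w, by simp [norm_smul, hw0], ?_⟩
  rw [real_inner_smul_left, Submodule.mem_orthogonal_singleton_iff_inner_left.1 hw, mul_zero]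

/-- The elements of `SO(3)` whose fixed point set on the unit sphere is exactly the
antipodal pair `{v₀, -v₀}` are precisely the non-identity rotations about the axis
through the unit vector `v₀`. -/
theorem SO3_fixedPoints_eq_pair_iff
    (v₀ : EuclideanSpace ℝ (Fin 3)) (hv₀ : ‖v₀‖ = 1)
    (A : Matrix.specialOrthogonalGroup (Fin 3) ℝ) :
    {x : EuclideanSpace ℝ (Fin 3) | ‖x‖ = 1 ∧ (A : Matrix (Fin 3) (Fin 3) ℝ).mulVec x = x}
        = {v₀, -v₀} ↔
      (A : Matrix (Fin 3) (Fin 3) ℝ).mulVec v₀ = v₀ ∧ A ≠ 1 := by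
  constructor
  · intro h
    have hmem := Set.ext_iff.1 h
    refine ⟨((hmem v₀).2 (by simp)).2, fun hA => ?_⟩
    obtain ⟨x, hx, hxv₀⟩ := exists_norm_eq_one_inner_eq_zero (by simp) v₀
    rcases (hmem x).1 ⟨hx, by simp [hA]⟩ with rfl | rfl <;> simp_all
  · rintro ⟨hfix, hA⟩
    ext x
    refine ⟨fun ⟨hx, hx_fixed⟩ => ?_, ?_⟩
    · by_contra hx_ne
      simp only [Set.mem_insert_iff, Set.mem_singleton_iff, not_or] at hx_ne
      have hli : LinearIndependent ℝ ![WithLp.ofLp x, WithLp.ofLp v₀] := by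
        have := (linearIndependent_pair_of_norm_eq_one hx hv₀ hx_ne.1 hx_ne.2).map'
          (WithLp.linearEquiv 2 ℝ (Fin 3 → ℝ)).toLinearMap (LinearEquiv.ker _)
        rwa [show _ ∘ ![x, v₀] = ![WithLp.ofLp x, WithLp.ofLp v₀] by
          ext i : 1; fin_cases i <;> rfl] at this
      exact hA (Subtype.ext
        (eq_one_of_mem_specialOrthogonalGroup_of_mulVec_eq_self A.2 hli hx_fixed hfix))
    · rintro (rfl | rfl)
      · exact ⟨hv₀, hfix⟩
      · exact ⟨by simpa using hv₀, by rw [WithLp.ofLp_neg, mulVec_neg, hfix]⟩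
end

section
/- Fix a unit vector v₀ ∈ EuclideanSpace ℝ (Fin 3). The subspace SO²(3) := {A ∈ SO(3) | A v₀ = v₀ and A ≠ 1}, with the subspace topology inherited from the space of 3×3 real matrices, is a contractible topological space. -/
/-!
Conjugating by an orthogonal matrix that sends `e₀` to `v₀` reduces to the axis `v₀ = e₀`.
A rotation fixing `e₀` is the block matrix `diag(1, R)` with `R ∈ SO(2)` determined by its first
column `(c, s)` on the unit circle, and it is the identity exactly when `c = 1`. So the space is
homeomorphic to the circle punctured at `(1, 0)`, which stereographic projection
`(c, s) ↦ s / (1 - c)` identifies with `ℝ`.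
-/

open Matrix

theorem exists_orthogonalGroup_mulVec_single_eq {ι : Type*} [Fintype ι] [DecidableEq ι] (i : ι)
    {v : EuclideanSpace ℝ ι} (hv : ‖v‖ = 1) :
    ∃ Q : orthogonalGroup ι ℝ, (Q : Matrix ι ι ℝ) *ᵥ Pi.single i 1 = v.ofLp := by
  have hv' : Orthonormal ℝ (({i} : Set ι).domRestrict fun _ ↦ v) :=
    orthonormal_subsingleton_iff.2 fun _ ↦ hv
  obtain ⟨b, hb⟩ := hv'.exists_orthonormalBasis_extension_of_card_eq (by simp)
  refine ⟨⟨_, (EuclideanSpace.basisFun ι ℝ).toMatrix_orthonormalBasis_mem_orthogonal b⟩, ?_⟩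
  ext j
  simp [Module.Basis.toMatrix_apply, hb i rfl]

section Conjugation

variable {n : Type*} [Fintype n] [DecidableEq n]

abbrev PuncturedStabilizer (v : n → ℝ) : Type _ :=
  {A : specialOrthogonalGroup n ℝ // (A : Matrix n n ℝ) *ᵥ v = v ∧ A ≠ 1}

theorem conj_mem_specialOrthogonalGroup (Q : orthogonalGroup n ℝ) {A : Matrix n n ℝ}
    (hA : A ∈ specialOrthogonalGroup n ℝ) :
    Q * A * star (Q : Matrix n n ℝ) ∈ specialOrthogonalGroup n ℝ := by
  rw [mem_specialOrthogonalGroup_iff] at hA ⊢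
  refine ⟨mul_mem (mul_mem Q.2 hA.1) (Unitary.star_mem Q.2), ?_⟩
  rw [det_mul, det_mul, mul_right_comm, ← det_mul, Unitary.mul_star_self_of_mem Q.2, det_one,
    one_mul, hA.2]

theorem star_mulVec_eq_of_mulVec_eq {Q : orthogonalGroup n ℝ} {v w : n → ℝ}
    (h : (Q : Matrix n n ℝ) *ᵥ v = w) : ((star Q : orthogonalGroup n ℝ) : Matrix n n ℝ) *ᵥ w = v := by
  rw [← h, mulVec_mulVec, Unitary.coe_star, Unitary.star_mul_self_of_mem Q.2, one_mulVec]

def PuncturedStabilizer.conj (Q : orthogonalGroup n ℝ) {v w : n → ℝ}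
    (hQv : (Q : Matrix n n ℝ) *ᵥ v = w) (A : PuncturedStabilizer v) : PuncturedStabilizer w :=
  ⟨⟨Q * A * star (Q : Matrix n n ℝ), conj_mem_specialOrthogonalGroup Q A.1.2⟩,
    by rw [← mulVec_mulVec, ← Unitary.coe_star, star_mulVec_eq_of_mulVec_eq hQv, ← mulVec_mulVec,
      A.2.1, hQv],
    fun h ↦ A.2.2 <| Subtype.ext <| (map_eq_one_iff (Unitary.conjStarAlgAut ℝ _ Q)
      (EquivLike.injective _)).1 (congrArg Subtype.val h)⟩

def PuncturedStabilizer.conjHomeomorph (Q : orthogonalGroup n ℝ) {v w : n → ℝ}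
    (hQv : (Q : Matrix n n ℝ) *ᵥ v = w) : PuncturedStabilizer v ≃ₜ PuncturedStabilizer w where
  toFun := conj Q hQv
  invFun := conj (star Q) (star_mulVec_eq_of_mulVec_eq hQv)
  left_inv A := by
    ext1; ext1
    simpa [conj] using (Unitary.conjStarAlgAut ℝ _ Q).symm_apply_apply A
  right_inv A := by
    ext1; ext1
    simpa [conj] using (Unitary.conjStarAlgAut ℝ _ Q).apply_symm_apply A
  continuous_toFun := by unfold conj; fun_prop
  continuous_invFun := by unfold conj; fun_prop

end Conjugation

def rotationX (c s : ℝ) : Matrix (Fin 3) (Fin 3) ℝ :=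
  !![1, 0, 0; 0, c, -s; 0, s, c]

theorem rotationX_mem_specialOrthogonalGroup {c s : ℝ} (h : c ^ 2 + s ^ 2 = 1) :
    rotationX c s ∈ specialOrthogonalGroup (Fin 3) ℝ := by
  refine mem_specialOrthogonalGroup_iff.2 ⟨(mem_orthogonalGroup_iff _ _).2 ?_, ?_⟩
  · ext i j
    fin_cases i <;> fin_cases j <;> simp [rotationX, mul_apply, Fin.sum_univ_three] <;>
      first | linear_combination h | ring
  · simp [rotationX, det_fin_three]
    linear_combination h

theorem rotationX_mulVec_single_zero (c s : ℝ) :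
    rotationX c s *ᵥ Pi.single 0 1 = Pi.single 0 1 := by
  ext i
  fin_cases i <;> simp [rotationX, mulVec, dotProduct, Fin.sum_univ_three]

theorem rotationX_eq_one_iff {c s : ℝ} (h : c ^ 2 + s ^ 2 = 1) : rotationX c s = 1 ↔ c = 1 := by
  refine ⟨fun h1 ↦ by simpa [rotationX] using congrFun (congrFun h1 1) 1, fun hc ↦ ?_⟩
  have hs : s = 0 := by subst hc; nlinarith
  ext i j
  fin_cases i <;> fin_cases j <;> simp [rotationX, hc, hs]

theorem eq_rotationX_of_mulVec_single_zero {A : Matrix (Fin 3) (Fin 3) ℝ}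
    (hA : A ∈ specialOrthogonalGroup (Fin 3) ℝ) (hfix : A *ᵥ Pi.single 0 1 = Pi.single 0 1) :
    A 1 1 ^ 2 + A 2 1 ^ 2 = 1 ∧ A = rotationX (A 1 1) (A 2 1) := by
  obtain ⟨horth, hdet⟩ := mem_specialOrthogonalGroup_iff.1 hA
  have orth i j := congrFun (congrFun ((mem_orthogonalGroup_iff' _ _).1 horth) i) j
  have h00 : A 0 0 = 1 := by simpa [mulVec, dotProduct, Fin.sum_univ_three] using congrFun hfix 0
  have h10 : A 1 0 = 0 := by simpa [mulVec, dotProduct, Fin.sum_univ_three] using congrFun hfix 1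
  have h20 : A 2 0 = 0 := by simpa [mulVec, dotProduct, Fin.sum_univ_three] using congrFun hfix 2
  have h01 : A 0 1 = 0 := by simpa [mul_apply, Fin.sum_univ_three, h00, h10, h20] using orth 0 1
  have h02 : A 0 2 = 0 := by simpa [mul_apply, Fin.sum_univ_three, h00, h10, h20] using orth 0 2
  have o11 : A 1 1 * A 1 1 + A 2 1 * A 2 1 = 1 := by
    simpa [mul_apply, Fin.sum_univ_three, h01] using orth 1 1
  have o12 : A 1 1 * A 1 2 + A 2 1 * A 2 2 = 0 := by
    simpa [mul_apply, Fin.sum_univ_three, h01] using orth 1 2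
  have hdet' : A 1 1 * A 2 2 - A 1 2 * A 2 1 = 1 := by
    simpa [det_fin_three, h00, h10, h20, h01, h02] using hdet
  have hcs : A 1 1 ^ 2 + A 2 1 ^ 2 = 1 := by linear_combination o11
  have h22 : A 2 2 = A 1 1 := by
    linear_combination (-A 2 2) * hcs + A 1 1 * hdet' + A 2 1 * o12
  have h12 : A 1 2 = -A 2 1 := by
    linear_combination (-A 1 2) * hcs + A 1 1 * o12 - A 2 1 * hdet'
  refine ⟨hcs, ?_⟩
  ext i j
  fin_cases i <;> fin_cases j <;> simp [rotationX, h00, h10, h20, h01, h02, h12, h22]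

abbrev PuncturedCircle : Type := {p : ℝ × ℝ // p.1 ^ 2 + p.2 ^ 2 = 1 ∧ p.1 ≠ 1}

noncomputable def PuncturedCircle.stereographic : PuncturedCircle ≃ₜ ℝ where
  toFun p := p.1.2 / (1 - p.1.1)
  invFun t := ⟨((t ^ 2 - 1) / (t ^ 2 + 1), 2 * t / (t ^ 2 + 1)), by
    constructor
    · field_simp; ring
    · rw [Ne, div_eq_one_iff_eq (by positivity)]; linarith⟩
  left_inv p := by
    obtain ⟨⟨c, s⟩, h, hc⟩ := p
    have h1 : 1 - c ≠ 0 := sub_ne_zero.2 hc.symm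
    ext
    · field_simp
      linear_combination (1 - c) * h
    · field_simp
      linear_combination (-s) * h
  right_inv t := by
    field_simp
    ring
  continuous_toFun := by
    fun_prop (disch := exact fun p ↦ sub_ne_zero.2 p.2.2.symm)
  continuous_invFun := by
    fun_prop (disch := intros; positivity)

noncomputable def puncturedStabilizerHomeomorphPuncturedCircle :
    PuncturedStabilizer (Pi.single 0 1 : Fin 3 → ℝ) ≃ₜ PuncturedCircle where
  toFun A :=
    have hA := eq_rotationX_of_mulVec_single_zero A.1.2 A.2.1
    ⟨(A.1.1 1 1, A.1.1 2 1), hA.1, fun h ↦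
      A.2.2 (Subtype.ext (hA.2.trans ((rotationX_eq_one_iff hA.1).2 h)))⟩
  invFun p := ⟨⟨rotationX p.1.1 p.1.2, rotationX_mem_specialOrthogonalGroup p.2.1⟩,
    rotationX_mulVec_single_zero _ _,
    fun h ↦ p.2.2 ((rotationX_eq_one_iff p.2.1).1 (congrArg Subtype.val h))⟩
  left_inv A := by
    ext1; ext1
    exact (eq_rotationX_of_mulVec_single_zero A.1.2 A.2.1).2.symm
  right_inv p := by
    ext <;> simp [rotationX]
  continuous_toFun := by
    have hA : Continuous fun A : PuncturedStabilizer (Pi.single 0 1 : Fin 3 → ℝ) ↦ A.1.1 := by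
      fun_prop
    exact ((hA.matrix_elem 1 1).prodMk (hA.matrix_elem 2 1)).subtype_mk _
  continuous_invFun := by
    unfold rotationX
    fun_prop

/-- The space `SO²(3)` of non-identity rotations about the axis through a fixed unit
vector `v₀`, with the subspace topology inherited from the `3 × 3` real matrices,
is contractible. -/
theorem SO2_of_3_contractible
    (v₀ : EuclideanSpace ℝ (Fin 3)) (hv₀ : ‖v₀‖ = 1) :
    ContractibleSpace {A : Matrix.specialOrthogonalGroup (Fin 3) ℝ //
      (A : Matrix (Fin 3) (Fin 3) ℝ).mulVec v₀ = v₀ ∧ A ≠ 1} := by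
  obtain ⟨Q, hQ⟩ := exists_orthogonalGroup_mulVec_single_eq 0 hv₀
  exact ((PuncturedStabilizer.conjHomeomorph Q hQ).symm.trans
    (puncturedStabilizerHomeomorphPuncturedCircle.trans
      PuncturedCircle.stereographic)).contractibleSpace
end

section
/- Fix a unit vector v₀ ∈ EuclideanSpace ℝ (Fin 3). The stabilizer subgroup {A ∈ SO(3) | A v₀ = v₀}, with the subspace topology inherited from the space of 3×3 real matrices, is homeomorphic to the circle group (the unit circle in ℂ). -/
/-!
Extending `v₀` to an orthonormal basis gives an orthogonal matrix `Q` with `Q e₂ = v₀`, where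
`e₂ = Pi.single 2 1`; conjugation by `Q` carries the stabilizer of `e₂` onto that of `v₀`, so we
may take `v₀ = e₂`. An element of `SO(3)` fixing `e₂` also fixes it under its transpose, hence is
block diagonal with a `2 × 2` block `[[a, -c], [c, a]]`, `a² + c² = 1`: it is the rotation by
`a + c i ∈ Circle`. This is a continuous bijection from the compact circle onto the Hausdorff
stabilizer.
-/

open Matrix

namespace Matrix

variable {n R : Type*} [Fintype n] [DecidableEq n] [CommRing R]

theorem transpose_mem_orthogonalGroup {Q : Matrix n n R} (hQ : Q ∈ orthogonalGroup n R) :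
    Qᵀ ∈ orthogonalGroup n R := by
  rw [mem_orthogonalGroup_iff, transpose_transpose]
  exact (mem_orthogonalGroup_iff' n R).mp hQ

theorem transpose_mulVec_mulVec_of_mem_orthogonalGroup {Q : Matrix n n R}
    (hQ : Q ∈ orthogonalGroup n R) (v : n → R) : Qᵀ *ᵥ (Q *ᵥ v) = v := by
  rw [mulVec_mulVec, (mem_orthogonalGroup_iff' n R).mp hQ, one_mulVec]

theorem conj_mem_specialOrthogonalGroup {Q A : Matrix n n R} (hQ : Q ∈ orthogonalGroup n R)
    (hA : A ∈ specialOrthogonalGroup n R) : Q * A * Qᵀ ∈ specialOrthogonalGroup n R := by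
  obtain ⟨hAO, hAdet⟩ := mem_specialOrthogonalGroup_iff.mp hA
  refine mem_specialOrthogonalGroup_iff.mpr
    ⟨mul_mem (mul_mem hQ hAO) (transpose_mem_orthogonalGroup hQ), ?_⟩
  rw [det_mul, det_mul, hAdet, mul_one, ← det_mul, (mem_orthogonalGroup_iff n R).mp hQ, det_one]

variable [TopologicalSpace R] [IsTopologicalRing R]

def orthogonalConjHomeomorph {Q : Matrix n n R} (hQ : Q ∈ orthogonalGroup n R) :
    Matrix n n R ≃ₜ Matrix n n R where
  toFun A := Q * A * Qᵀ
  invFun A := Qᵀ * A * Q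
  left_inv A := by
    simp only [← mul_assoc, (mem_orthogonalGroup_iff' n R).mp hQ, one_mul]
    simp only [mul_assoc, (mem_orthogonalGroup_iff' n R).mp hQ, mul_one]
  right_inv A := by
    simp only [← mul_assoc, (mem_orthogonalGroup_iff n R).mp hQ, one_mul]
    simp only [mul_assoc, (mem_orthogonalGroup_iff n R).mp hQ, mul_one]
  continuous_toFun := by fun_prop
  continuous_invFun := by fun_prop

def specialOrthogonalGroupConjHomeomorph {Q : Matrix n n R} (hQ : Q ∈ orthogonalGroup n R) :
    specialOrthogonalGroup n R ≃ₜ specialOrthogonalGroup n R :=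
  (orthogonalConjHomeomorph hQ).subtype fun A ↦ by
    refine ⟨conj_mem_specialOrthogonalGroup hQ, fun h ↦ ?_⟩
    have := conj_mem_specialOrthogonalGroup (transpose_mem_orthogonalGroup hQ) h
    rw [transpose_transpose] at this
    convert this using 1
    exact ((orthogonalConjHomeomorph hQ).symm_apply_apply A).symm

def stabilizerHomeomorphOfMulVecEq {Q : Matrix n n R} (hQ : Q ∈ orthogonalGroup n R)
    {v w : n → R} (hQw : Q *ᵥ w = v) :
    {A : specialOrthogonalGroup n R // (A : Matrix n n R) *ᵥ w = w} ≃ₜ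
      {A : specialOrthogonalGroup n R // (A : Matrix n n R) *ᵥ v = v} :=
  (specialOrthogonalGroupConjHomeomorph hQ).subtype fun A ↦ by
    subst hQw
    change _ ↔ (Q * (A : Matrix n n R) * Qᵀ) *ᵥ (Q *ᵥ w) = Q *ᵥ w
    rw [← mulVec_mulVec, ← mulVec_mulVec, transpose_mulVec_mulVec_of_mem_orthogonalGroup hQ,
      (Function.LeftInverse.injective (g := (Qᵀ *ᵥ ·))
        (transpose_mulVec_mulVec_of_mem_orthogonalGroup hQ)).eq_iff]

end Matrix

theorem exists_mem_orthogonalGroup_mulVec_single_eq {n : Type*} [Fintype n] [DecidableEq n]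
    {v : EuclideanSpace ℝ n} (hv : ‖v‖ = 1) (i : n) :
    ∃ Q ∈ orthogonalGroup n ℝ, Q *ᵥ Pi.single i 1 = v.ofLp := by
  have hv' : Orthonormal ℝ (({i} : Set n).domRestrict fun _ ↦ v) :=
    ⟨fun _ ↦ hv, fun j k hjk ↦ (hjk (Subsingleton.elim j k)).elim⟩
  obtain ⟨b, hb⟩ := hv'.exists_orthonormalBasis_extension_of_card_eq (by simp)
  refine ⟨_, (EuclideanSpace.basisFun n ℝ).toMatrix_orthonormalBasis_mem_orthogonal b, ?_⟩
  ext k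
  simp [mulVec_single, Module.Basis.toMatrix_apply, hb i rfl]

def rotationAboutThirdAxis (z : Circle) : Matrix (Fin 3) (Fin 3) ℝ :=
  !![(z : ℂ).re, -(z : ℂ).im, 0; (z : ℂ).im, (z : ℂ).re, 0; 0, 0, 1]

theorem rotationAboutThirdAxis_mem_specialOrthogonalGroup (z : Circle) :
    rotationAboutThirdAxis z ∈ specialOrthogonalGroup (Fin 3) ℝ := by
  have hz := Complex.normSq_apply (z : ℂ) ▸ Circle.normSq_coe z
  refine mem_specialOrthogonalGroup_iff.mpr ⟨(mem_orthogonalGroup_iff _ _).mpr ?_, ?_⟩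
  · ext i j
    fin_cases i <;> fin_cases j <;>
      simp [rotationAboutThirdAxis, mul_apply, Fin.sum_univ_three] <;> linarith
  · simp only [rotationAboutThirdAxis, det_fin_three, of_apply, cons_val', cons_val_zero,
      cons_val_fin_one, cons_val_one, cons_val, mul_one, mul_zero, sub_zero, neg_mul,
      sub_neg_eq_add, add_zero, zero_mul]
    linarith

theorem rotationAboutThirdAxis_mulVec_single_two (z : Circle) :
    rotationAboutThirdAxis z *ᵥ Pi.single 2 1 = Pi.single 2 1 := by
  ext i
  fin_cases i <;> simp [rotationAboutThirdAxis, mulVec_single]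

theorem rotationAboutThirdAxis_injective : Function.Injective rotationAboutThirdAxis := by
  intro z w h
  have h00 := congrFun (congrFun h 0) 0
  have h10 := congrFun (congrFun h 1) 0
  simp only [rotationAboutThirdAxis, of_apply, cons_val', cons_val_zero, cons_val_one,
    empty_val', cons_val_fin_one] at h00 h10
  exact Circle.ext (Complex.ext h00 h10)

theorem continuous_rotationAboutThirdAxis : Continuous rotationAboutThirdAxis := by
  refine continuous_matrix fun i j ↦ ?_
  fin_cases i <;> fin_cases j <;> simp [rotationAboutThirdAxis] <;> fun_prop

theorem exists_rotationAboutThirdAxis_eq {A : Matrix (Fin 3) (Fin 3) ℝ}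
    (hA : A ∈ specialOrthogonalGroup (Fin 3) ℝ) (hfix : A *ᵥ Pi.single 2 1 = Pi.single 2 1) :
    ∃ z, rotationAboutThirdAxis z = A := by
  obtain ⟨hAO, hAdet⟩ := mem_specialOrthogonalGroup_iff.mp hA
  have hcol : ∀ i, A i 2 = (Pi.single 2 1 : Fin 3 → ℝ) i := fun i ↦ by
    simpa [mulVec_single] using congrFun hfix i
  have hrow : ∀ j, A 2 j = (Pi.single 2 1 : Fin 3 → ℝ) j := fun j ↦ by
    have := transpose_mulVec_mulVec_of_mem_orthogonalGroup hAO (Pi.single 2 1)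
    rw [hfix] at this
    simpa [mulVec_single] using congrFun this j
  have h00 := congrFun (congrFun ((mem_orthogonalGroup_iff' _ _).mp hAO) 0) 0
  have h01 := congrFun (congrFun ((mem_orthogonalGroup_iff' _ _).mp hAO) 0) 1
  simp only [mul_apply, transpose_apply, Fin.sum_univ_three, hrow, ne_eq, Fin.reduceEq,
    not_false_eq_true, Pi.single_eq_of_ne, mul_zero, add_zero, one_apply_eq, zero_ne_one,
    one_apply_ne] at h00 h01
  simp only [det_fin_three, hcol, hrow, Pi.single_eq_same, ne_eq, Fin.reduceEq,
    not_false_eq_true, Pi.single_eq_of_ne, mul_one, mul_zero, zero_mul, sub_zero,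
    add_zero] at hAdet
  have hd : A 1 1 = A 0 0 := by
    linear_combination A 0 0 * hAdet + A 1 0 * h01 - A 1 1 * h00
  have hb : A 0 1 = -A 1 0 := by
    linear_combination -A 0 1 * h00 + A 0 0 * h01 - A 1 0 * hAdet
  refine ⟨⟨⟨A 0 0, A 1 0⟩, ?_⟩, ?_⟩
  · simpa [Submonoid.unitSphere, Complex.norm_def, Complex.normSq_apply] using h00
  · ext i j
    fin_cases i <;> fin_cases j <;> simp [rotationAboutThirdAxis, hcol, hrow, hd, hb]

noncomputable def rotationAboutThirdAxisHomeomorph : Circle ≃ₜ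
    {A : specialOrthogonalGroup (Fin 3) ℝ //
      (A : Matrix (Fin 3) (Fin 3) ℝ) *ᵥ Pi.single 2 1 = Pi.single 2 1} :=
  Continuous.homeoOfEquivCompactToT2 (f := Equiv.ofBijective
    (fun z ↦ ⟨⟨rotationAboutThirdAxis z, rotationAboutThirdAxis_mem_specialOrthogonalGroup z⟩,
      rotationAboutThirdAxis_mulVec_single_two z⟩)
    ⟨fun _ _ h ↦ rotationAboutThirdAxis_injective (congrArg (·.1.1) h), fun A ↦
      (exists_rotationAboutThirdAxis_eq A.1.2 A.2).imp fun _ hz ↦ Subtype.ext (Subtype.ext hz)⟩)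
    ((continuous_rotationAboutThirdAxis.subtype_mk _).subtype_mk _)

/-- The stabilizer in `SO(3)` of a unit vector `v₀`, with the subspace topology
inherited from the `3 × 3` real matrices, is homeomorphic to the circle group. -/
theorem SO3_stabilizer_homeomorph_circle
    (v₀ : EuclideanSpace ℝ (Fin 3)) (hv₀ : ‖v₀‖ = 1) :
    Nonempty ({A : Matrix.specialOrthogonalGroup (Fin 3) ℝ //
      (A : Matrix (Fin 3) (Fin 3) ℝ).mulVec v₀ = v₀} ≃ₜ Circle) := by
  obtain ⟨Q, hQ, hQe₂⟩ := exists_mem_orthogonalGroup_mulVec_single_eq hv₀ 2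
  exact ⟨(stabilizerHomeomorphOfMulVecEq hQ hQe₂).symm.trans rotationAboutThirdAxisHomeomorph.symm⟩
end
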